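/- arXiv:1510.07606 — 4 statements merged into one kernel-verified Lean document; each statement's English description precedes it below -/
import Mathlib

section
/- Let μ, ν, ω, ε be real numbers with μ ≠ 0, ν² < (ω-ε)², ε > 0. Define φ(t) = μ·( e^{2μ(ω-ε)t}/(ν-(ω-ε)) - 1/(ν+(ω-ε)) ) / (1 - e^{2μ(ω-ε)t}) for t > 0. Then φ satisfies the Riccati-type ODE: -(μ + νφ(t))² + ((ω-ε)φ(t))² + φ'(t) = 0 for all t > 0. -/
theorem stmt1 (μ ν ω ε : ℝ) (hμ : μ ≠ 0) (hνω : ν ^ 2 < (ω - ε) ^ 2) (hε : 0 < ε)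
    (φ : ℝ → ℝ)
    (hφ : ∀ t, φ t = μ * (Real.exp (2 * μ * (ω - ε) * t) / (ν - (ω - ε))
        - 1 / (ν + (ω - ε))) / (1 - Real.exp (2 * μ * (ω - ε) * t))) :
    ∀ t > 0, -(μ + ν * φ t) ^ 2 + ((ω - ε) * φ t) ^ 2 + deriv φ t = 0 := by
  set a := ω - ε with ha
  have ha0 : a ≠ 0 := by
    intro h; rw [h] at hνω; nlinarith [sq_nonneg ν]
  have h1 : ν - a ≠ 0 := by
    intro h; have : ν = a := by linarith
    rw [this] at hνω; linarith
  have h2 : ν + a ≠ 0 := by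
    intro h; have : ν = -a := by linarith
    rw [this] at hνω; nlinarith
  have hφf : φ = fun t => μ * (Real.exp (2 * μ * a * t) / (ν - a)
      - 1 / (ν + a)) / (1 - Real.exp (2 * μ * a * t)) := funext hφ
  intro t ht
  have hEne : 1 - Real.exp (2 * μ * a * t) ≠ 0 := by
    intro h
    have hee : Real.exp (2 * μ * a * t) = Real.exp 0 := by rw [Real.exp_zero]; linarith
    have hx : 2 * μ * a * t = 0 := Real.exp_injective hee
    have h2' : 2 * μ * a ≠ 0 := by positivity
    exact (mul_ne_zero h2' (ne_of_gt ht)) hx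
  set E := Real.exp (2 * μ * a * t) with hE
  have hexp : HasDerivAt (fun t => Real.exp (2 * μ * a * t)) (E * (2 * μ * a)) t := by
    have := ((hasDerivAt_id t).const_mul (2 * μ * a)).exp
    simpa using this
  have hnum : HasDerivAt (fun t => μ * (Real.exp (2 * μ * a * t) / (ν - a) - 1 / (ν + a)))
      (μ * (E * (2 * μ * a) / (ν - a))) t := by
    have := ((hexp.div_const (ν - a)).sub_const (1 / (ν + a))).const_mul μ
    simpa using this
  have hden : HasDerivAt (fun t => 1 - Real.exp (2 * μ * a * t)) (-(E * (2 * μ * a))) t := by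
    simpa using hexp.const_sub (1:ℝ)
  have hdiv := hnum.div hden hEne
  have hderiv : deriv φ t = (μ * (E * (2 * μ * a) / (ν - a)) * (1 - E)
      - μ * (E / (ν - a) - 1 / (ν + a)) * (-(E * (2 * μ * a)))) / (1 - E) ^ 2 := by
    rw [hφf]
    exact hdiv.deriv
  rw [hderiv, hφ t, ← hE]
  field_simp
  ring
end

section
/- Let μ, ν, ω, ε be real numbers with μ ≠ 0, ω > 0, ν² < (ω-ε)², and 0 < ε < 2ω. Define φ(t) = μ·( e^{2μ(ω-ε)t}/(ν-(ω-ε)) - 1/(ν+(ω-ε)) ) / (1 - e^{2μ(ω-ε)t}) for t > 0. Then for all t > 0: -(μ + νφ(t))² + (ωφ(t))² + φ'(t) > 0. -/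
theorem stmt2 (μ ν ω ε : ℝ) (hμ : μ ≠ 0) (hω : 0 < ω) (hνω : ν ^ 2 < (ω - ε) ^ 2)
    (hε0 : 0 < ε) (hε2 : ε < 2 * ω)
    (φ : ℝ → ℝ)
    (hφ : ∀ t, φ t = μ * (Real.exp (2 * μ * (ω - ε) * t) / (ν - (ω - ε))
        - 1 / (ν + (ω - ε))) / (1 - Real.exp (2 * μ * (ω - ε) * t))) :
    ∀ t > 0, -(μ + ν * φ t) ^ 2 + (ω * φ t) ^ 2 + deriv φ t > 0 := by
  intro t ht
  set a := ω - ε with ha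
  have ha0 : a ≠ 0 := by
    intro h; rw [h] at hνω; nlinarith [sq_nonneg ν]
  have hprod : (ν - a) * (ν + a) < 0 := by nlinarith
  have hna : ν - a ≠ 0 := by intro h; rw [h] at hprod; simp at hprod
  have hpa : ν + a ≠ 0 := by intro h; rw [h] at hprod; simp at hprod
  set c := 2 * μ * a with hc
  have hc0 : c ≠ 0 := by
    simp only [hc]; positivity
  set E := Real.exp (c * t) with hE
  have hEpos : 0 < E := Real.exp_pos _
  have hE1 : E ≠ 1 := by
    rw [hE, ne_eq, Real.exp_eq_one_iff]
    exact mul_ne_zero hc0 (ne_of_gt ht)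
  have hden : 1 - E ≠ 0 := by
    intro h; apply hE1; linarith
  have hφfun : φ = fun s => μ * (Real.exp (c * s) / (ν - a)
      - 1 / (ν + a)) / (1 - Real.exp (c * s)) := by
    funext s; exact hφ s
  -- derivative
  have hEd : HasDerivAt (fun s => Real.exp (c * s)) (Real.exp (c * t) * c) t := by
    simpa using ((hasDerivAt_id t).const_mul c).exp
  have hnum : HasDerivAt (fun s => μ * (Real.exp (c * s) / (ν - a) - 1 / (ν + a)))
      (μ * (Real.exp (c * t) * c / (ν - a))) t := by
    exact ((hEd.div_const (ν - a)).sub_const (1 / (ν + a))).const_mul μ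
  have hdenom : HasDerivAt (fun s => 1 - Real.exp (c * s)) (-(Real.exp (c * t) * c)) t :=
    by have h := (hasDerivAt_const t (1:ℝ)).sub hEd; simp only [zero_sub] at h; exact h
  have hd : HasDerivAt φ
      ((μ * (E * c / (ν - a)) * (1 - E) -
        μ * (E / (ν - a) - 1 / (ν + a)) * (-(E * c))) / (1 - E) ^ 2) t := by
    rw [hφfun]
    exact hnum.div hdenom hden
  have hderiv : deriv φ t = (μ * (E * c / (ν - a)) * (1 - E) -
      μ * (E / (ν - a) - 1 / (ν + a)) * (-(E * c))) / (1 - E) ^ 2 := hd.deriv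
  have hφt : φ t = μ * (E / (ν - a) - 1 / (ν + a)) / (1 - E) := by rw [hφ t]
  -- Riccati identity
  have hric : -(μ + ν * φ t) ^ 2 + (a * φ t) ^ 2 + deriv φ t = 0 := by
    rw [hφt, hderiv, hc]
    field_simp
    ring
  -- φ t ≠ 0
  have hX : E / (ν - a) - 1 / (ν + a) ≠ 0 := by
    rw [sub_ne_zero, ne_eq, div_eq_div_iff hna hpa]
    rcases mul_neg_iff.mp hprod with ⟨h1, h2⟩ | ⟨h1, h2⟩
    · intro heq
      have := mul_neg_of_pos_of_neg hEpos h2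
      nlinarith
    · intro heq
      have := mul_pos hEpos h2
      nlinarith
  have hφt0 : φ t ≠ 0 := by
    rw [hφt]
    exact div_ne_zero (mul_ne_zero hμ hX) hden
  have key : -(μ + ν * φ t) ^ 2 + (ω * φ t) ^ 2 + deriv φ t
      = φ t ^ 2 * (ω ^ 2 - a ^ 2) := by
    nlinarith [hric]
  rw [key]
  have h1 : 0 < ω ^ 2 - a ^ 2 := by nlinarith
  positivity
end

section
/- Let n be a positive integer with n ≤ 3, c > 0, 0 < α < 1, and β(1-α)/(cn) satisfying -( 2+√2)/4 < β(1-α)/(cn) < -(2-√2)/4. Define A(0) = 2β²(1-α)/n - n(c + 4β(1-α)/n)²/(8(1-α)). Then A(0) > 0. -/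
theorem stmt9 (n : ℕ) (hn1 : 1 ≤ n) (hn3 : n ≤ 3) (c α β : ℝ)
    (hc : 0 < c) (hα0 : 0 < α) (hα1 : α < 1)
    (hlo : -(2 + Real.sqrt 2) / 4 < β * (1 - α) / (c * n))
    (hhi : β * (1 - α) / (c * n) < -(2 - Real.sqrt 2) / 4) :
    2 * β ^ 2 * (1 - α) / n - n * (c + 4 * β * (1 - α) / n) ^ 2 / (8 * (1 - α)) > 0 := by
  have hN : (0:ℝ) < (n:ℝ) := by exact_mod_cast hn1
  have h1α : 0 < 1 - α := by linarith
  have hcn : 0 < c * (n:ℝ) := mul_pos hc hN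
  have hs : Real.sqrt 2 < 3/2 := by
    nlinarith [Real.sq_sqrt (show (0:ℝ) ≤ 2 by norm_num), Real.sqrt_nonneg 2]
  have hhi' : β * (1 - α) / (c * n) < -(1/8) := lt_trans hhi (by nlinarith)
  have hB : β * (1 - α) < -(1/8) * (c * n) := (div_lt_iff₀ hcn).mp hhi'
  have key : 16 * (β * (1 - α))^2 - (c * (n:ℝ) + 4 * (β * (1 - α)))^2 > 0 := by
    nlinarith [mul_lt_mul_of_pos_left hB hcn]
  have heq : 2 * β ^ 2 * (1 - α) / n - n * (c + 4 * β * (1 - α) / n) ^ 2 / (8 * (1 - α))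
      = (16 * (β * (1 - α))^2 - (c * (n:ℝ) + 4 * (β * (1 - α)))^2) / (8 * (n:ℝ) * (1 - α)) := by
    field_simp
    ring
  rw [heq]
  exact div_pos key (by positivity)
end

section
/- Let c > 0, n ≥ 1, 0 < α < 1, β < 0 with β(1-α)/(cn) ∈ (-(2+√2)/4, -(2-√2)/4). Set x = 8β(1-α)/(cn); then M'' := 4(1-α)c·(1 + (β/c)/(1 + x/2 + √(-1 - x))) is well-defined (i.e., 1 + x/2 + √(-1-x) ≠ 0 and -1 - x > 0), and at α = 0 with β = -c/2 and n ∈ {1,2,3}, M'' = 2c(2 - n/(n - 2 + √(4n - n²))). -/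
theorem stmt19 (c α β : ℝ) (n : ℕ) (hn : 1 ≤ n)
    (hc : 0 < c) (hα0 : 0 < α) (hα1 : α < 1) (hβ : β < 0)
    (hmem : β * (1 - α) / (c * n) ∈
      Set.Ioo (-(2 + Real.sqrt 2) / 4) (-(2 - Real.sqrt 2) / 4)) :
    (-1 - 8 * β * (1 - α) / (c * n) > 0
      ∧ 1 + (8 * β * (1 - α) / (c * n)) / 2
          + Real.sqrt (-1 - 8 * β * (1 - α) / (c * n)) ≠ 0)
    ∧ ∀ m : ℕ, (m = 1 ∨ m = 2 ∨ m = 3) →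
        4 * (1 - (0 : ℝ)) * c * (1 + ((-c / 2) / c) /
          (1 + (8 * (-c / 2) * (1 - (0 : ℝ)) / (c * m)) / 2
            + Real.sqrt (-1 - 8 * (-c / 2) * (1 - (0 : ℝ)) / (c * m))))
        = 2 * c * (2 - m / (m - 2 + Real.sqrt (4 * m - m ^ 2))) := by
  obtain ⟨h1, h2⟩ := hmem
  have hs2 : Real.sqrt 2 ^ 2 = 2 := Real.sq_sqrt (by norm_num)
  have hs2n : (0:ℝ) ≤ Real.sqrt 2 := Real.sqrt_nonneg 2
  have hc' : c ≠ 0 := ne_of_gt hc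
  have hu : 8 * β * (1 - α) / (c * n) = 8 * (β * (1 - α) / (c * n)) := by ring
  have hpos : -1 - 8 * β * (1 - α) / (c * n) > 0 := by
    rw [hu]; nlinarith
  refine ⟨⟨hpos, ?_⟩, ?_⟩
  · intro heq
    set u := 8 * β * (1 - α) / (c * n) with hudef
    have hsq : Real.sqrt (-1 - u) ^ 2 = -1 - u := Real.sq_sqrt (le_of_lt hpos)
    have hsn : (0:ℝ) ≤ Real.sqrt (-1 - u) := Real.sqrt_nonneg _
    have hval : Real.sqrt (-1 - u) = -(1 + u / 2) := by linarith
    have hq : u ^ 2 + 8 * u + 8 = 0 := by nlinarith [hval ▸ hsq]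
    have hb1 : u > 8 * (-(2 + Real.sqrt 2) / 4) := by rw [hu]; linarith
    have hb2 : u < 8 * (-(2 - Real.sqrt 2) / 4) := by rw [hu]; linarith
    nlinarith [sq_nonneg (u + 4)]
  · have key : ∀ k : ℝ, 0 < k → 0 ≤ 4 * k - k ^ 2 →
        k - 2 + Real.sqrt (4 * k - k ^ 2) ≠ 0 →
        4 * (1 - (0 : ℝ)) * c * (1 + ((-c / 2) / c) /
          (1 + (8 * (-c / 2) * (1 - (0 : ℝ)) / (c * k)) / 2
            + Real.sqrt (-1 - 8 * (-c / 2) * (1 - (0 : ℝ)) / (c * k))))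
        = 2 * c * (2 - k / (k - 2 + Real.sqrt (4 * k - k ^ 2))) := by
      intro k hk h4 hD
      have hk' : k ≠ 0 := ne_of_gt hk
      have hA : -1 - 8 * (-c / 2) * (1 - (0:ℝ)) / (c * k)
          = (4 * k - k ^ 2) / k ^ 2 := by field_simp; ring
      rw [hA, Real.sqrt_div h4, Real.sqrt_sq hk.le]
      set s := Real.sqrt (4 * k - k ^ 2) with hsdef
      have hden : 1 + (8 * (-c / 2) * (1 - (0:ℝ)) / (c * k)) / 2 + s / k
          = (k - 2 + s) / k := by field_simp; ring
      rw [hden]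
      field_simp
      ring
    intro m hm
    have h3 : (1:ℝ) < Real.sqrt 3 := by
      have := Real.sq_sqrt (by norm_num : (0:ℝ) ≤ 3)
      nlinarith [Real.sqrt_nonneg 3]
    rcases hm with rfl | rfl | rfl
    · have := key 1 (by norm_num) (by norm_num) (by
        push_cast
        have : Real.sqrt (4 * 1 - 1 ^ 2) = Real.sqrt 3 := by norm_num
        rw [this]; intro h; nlinarith)
      push_cast at this ⊢
      convert this using 4 <;> norm_num
    · have hsq4 : Real.sqrt (4 * 2 - 2 ^ 2) = 2 := by
        norm_num
      have := key 2 (by norm_num) (by norm_num) (by rw [hsq4]; norm_num)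
      push_cast at this ⊢
      convert this using 4 <;> norm_num
    · have := key 3 (by norm_num) (by norm_num) (by
        have : Real.sqrt (4 * 3 - 3 ^ 2) = Real.sqrt 3 := by norm_num
        rw [this]; intro h; nlinarith [Real.sqrt_nonneg 3])
      push_cast at this ⊢
      convert this using 4 <;> norm_num
end
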